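/- Let A be a contractive μ-type and 𝔸_1, …, 𝔸_n ∈ 𝔗 such that ⟦A⟧ = ⊕_{i∈1..n}𝔸_i and each 𝔸_i is not a union. Then there exist n' ≤ n, maximal ⊕-contexts 𝖠, 𝖠_1, …, 𝖠_{n'}, contractive μ-types A_1, …, A_{n'} none of which is a union, and functions s, t : 1..n' → 1..n such that A = 𝖠[A_1, …, A_{n'}] and ⟦A_l⟧ = 𝖠_l[𝔸_{s(l)}, …, 𝔸_{t(l)}] for every l ∈ 1..n'. -/
import Mathlib


set_option maxHeartbeats 1000000

namespace CAPPaper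

/- ## μ-types: datatype variables `var true v`, type variables `var false v`,
   type constants `const c` (with `const 0` also playing the role of junk/∘),
   type application `app`, function types `arrow`, unions `union`,
   recursive types `mu`. -/

inductive MuTy : Type
  | var : Bool → ℕ → MuTy
  | const : ℕ → MuTy
  | app : MuTy → MuTy → MuTy
  | arrow : MuTy → MuTy → MuTy
  | union : MuTy → MuTy → MuTy
  | mu : Bool → ℕ → MuTy → MuTy

namespace MuTy

/-- Naive substitution of `T` for the variable `(b, v)`; binders shadow. -/
def subst (b : Bool) (v : ℕ) (T : MuTy) : MuTy → MuTy
  | var b' v' => if b' = b ∧ v' = v then T else var b' v'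
  | const c => const c
  | app A B => app (subst b v T A) (subst b v T B)
  | arrow A B => arrow (subst b v T A) (subst b v T B)
  | union A B => union (subst b v T A) (subst b v T B)
  | mu b' v' A => if b' = b ∧ v' = v then mu b' v' A else mu b' v' (subst b v T A)

/-- The variable `(b, v)` occurs free. -/
def FreeIn (b : Bool) (v : ℕ) : MuTy → Prop
  | var b' v' => b' = b ∧ v' = v
  | const _ => False
  | app A B => FreeIn b v A ∨ FreeIn b v B
  | arrow A B => FreeIn b v A ∨ FreeIn b v B
  | union A B => FreeIn b v A ∨ FreeIn b v B
  | mu b' v' A => ¬(b' = b ∧ v' = v) ∧ FreeIn b v A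

/-- The variable `(b, v)` occurs only under `⊃` or `@`. -/
def Guarded (b : Bool) (v : ℕ) : MuTy → Prop
  | var b' v' => ¬(b' = b ∧ v' = v)
  | const _ => True
  | app _ _ => True
  | arrow _ _ => True
  | union A B => Guarded b v A ∧ Guarded b v B
  | mu b' v' A => (b' = b ∧ v' = v) ∨ Guarded b v A

/-- Contractive μ-types. -/
def Contr : MuTy → Prop
  | var _ _ => True
  | const _ => True
  | app A B => Contr A ∧ Contr B
  | arrow A B => Contr A ∧ Contr B
  | union A B => Contr A ∧ Contr B
  | mu b v A => Guarded b v A ∧ Contr A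

/-- μ-datatypes. -/
inductive IsData : MuTy → Prop
  | var (v : ℕ) : IsData (var true v)
  | const (c : ℕ) : IsData (const c)
  | app {D : MuTy} (A : MuTy) : IsData D → IsData (app D A)
  | union {D D' : MuTy} : IsData D → IsData D' → IsData (union D D')
  | mu {v : ℕ} {D : MuTy} : IsData D → IsData (mu true v D)

def IsMu : MuTy → Prop
  | mu _ _ _ => True
  | _ => False

def IsUnion : MuTy → Prop
  | union _ _ => True
  | _ => False

def IsAtom : MuTy → Prop
  | var _ _ => True
  | const _ => True
  | _ => False

/-- The non-union components of a maximal union, in left-to-right order. -/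
def comps : MuTy → List MuTy
  | union A B => comps A ++ comps B
  | A => [A]

/-- Replace the `i`-th (left-to-right) non-union component of a maximal union. -/
def replaceComp : MuTy → ℕ → MuTy → MuTy
  | union A B, i, N =>
      if i < (comps A).length then union (replaceComp A i N) B
      else union A (replaceComp B (i - (comps A).length) N)
  | A, i, N => if i = 0 then N else A

end MuTy

/- ## Type equivalence `≈μ` -/

inductive EqMu : MuTy → MuTy → Prop
  | refl (A : MuTy) : EqMu A A
  | symm {A B : MuTy} : EqMu A B → EqMu B A
  | trans {A B C : MuTy} : EqMu A B → EqMu B C → EqMu A C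
  | app {D D' A A' : MuTy} : EqMu D D' → EqMu A A' → EqMu (.app D A) (.app D' A')
  | arrow {A A' B B' : MuTy} : EqMu A A' → EqMu B B' → EqMu (.arrow A B) (.arrow A' B')
  | union {A A' B B' : MuTy} : EqMu A A' → EqMu B B' → EqMu (.union A B) (.union A' B')
  | mu {A B : MuTy} (b : Bool) (v : ℕ) : EqMu A B → EqMu (.mu b v A) (.mu b v B)
  | idem (A : MuTy) : EqMu (.union A A) A
  | comm (A B : MuTy) : EqMu (.union A B) (.union B A)
  | assoc (A B C : MuTy) : EqMu (.union A (.union B C)) (.union (.union A B) C)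
  | fold (b : Bool) (v : ℕ) (A : MuTy) : EqMu (.mu b v A) (MuTy.subst b v (.mu b v A) A)
  | contract {A B : MuTy} {b : Bool} {v : ℕ} :
      EqMu A (MuTy.subst b v A B) → MuTy.Contr (.mu b v B) → EqMu A (.mu b v B)

/- ## Subtyping `Σ ⊢ A ≤μ B` -/

inductive SubMu : Set ((Bool × ℕ) × (Bool × ℕ)) → MuTy → MuTy → Prop
  | refl (SS) (A : MuTy) : SubMu SS A A
  | hyp {SS} {V W : Bool × ℕ} : (V, W) ∈ SS → SubMu SS (.var V.1 V.2) (.var W.1 W.2)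
  | eq {A B : MuTy} (SS) : EqMu A B → SubMu SS A B
  | trans {SS} {A B C : MuTy} : SubMu SS A B → SubMu SS B C → SubMu SS A C
  | app {SS} {D D' A A' : MuTy} : SubMu SS D D' → SubMu SS A A' →
      SubMu SS (.app D A) (.app D' A')
  | arrow {SS} {A A' B B' : MuTy} : SubMu SS A A' → SubMu SS B B' →
      SubMu SS (.arrow A' B) (.arrow A B')
  | unionL {SS} {A B C : MuTy} : SubMu SS A C → SubMu SS B C → SubMu SS (.union A B) C
  | unionR1 {SS} {A B C : MuTy} : SubMu SS A B → SubMu SS A (.union B C)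
  | unionR2 {SS} {A B C : MuTy} : SubMu SS A C → SubMu SS A (.union B C)
  | mu {SS} {V W : Bool × ℕ} {A B : MuTy} :
      SubMu (insert (V, W) SS) A B →
      ¬ MuTy.FreeIn W.1 W.2 A → ¬ MuTy.FreeIn V.1 V.2 B →
      SubMu SS (.mu V.1 V.2 A) (.mu W.1 W.2 B)

/-- `A ≤μ B` (empty set of hypotheses). -/
def Sub (A B : MuTy) : Prop := SubMu ∅ A B

/- ## Coinductive equivalence `≈⃗μ` and subtyping `≤⃗μ` on μ-types,
   given via their generating functions and greatest fixed points. -/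

/-- One-step unfolding of the rules for `≈⃗μ`. -/
def EqVecStep (R : MuTy → MuTy → Prop) (A B : MuTy) : Prop :=
  (MuTy.IsAtom A ∧ A = B)
  ∨ (∃ D A' D' B', A = .app D A' ∧ B = .app D' B' ∧ R D D' ∧ R A' B')
  ∨ (∃ A1 A2 B1 B2, A = .arrow A1 A2 ∧ B = .arrow B1 B2 ∧ R A1 B1 ∧ R A2 B2)
  ∨ (∃ i b v C, (∀ X ∈ A.comps.take i, ¬ X.IsMu) ∧ A.comps[i]? = some (.mu b v C) ∧
      R (A.replaceComp i (MuTy.subst b v (.mu b v C) C)) B)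
  ∨ ((∀ X ∈ A.comps, ¬ X.IsMu) ∧
      ∃ j b w C, (∀ Y ∈ B.comps.take j, ¬ Y.IsMu) ∧ B.comps[j]? = some (.mu b w C) ∧
      R A (B.replaceComp j (MuTy.subst b w (.mu b w C) C)))
  ∨ ((A.IsUnion ∨ B.IsUnion) ∧ (∀ X ∈ A.comps, ¬ X.IsMu) ∧ (∀ Y ∈ B.comps, ¬ Y.IsMu) ∧
      (∀ X ∈ A.comps, ∃ Y ∈ B.comps, R X Y) ∧ (∀ Y ∈ B.comps, ∃ X ∈ A.comps, R X Y))

/-- The generating function `Φ≈⃗μ`. -/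
def PhiEqVec (X : Set (MuTy × MuTy)) : Set (MuTy × MuTy) :=
  {p | EqVecStep (fun a b => (a, b) ∈ X) p.1 p.2}

/-- `A ≈⃗μ B`: the greatest fixed point of `Φ≈⃗μ`. -/
def EqVec (A B : MuTy) : Prop :=
  ∃ R : MuTy → MuTy → Prop, (∀ x y, R x y → EqVecStep R x y) ∧ R A B

/-- One-step unfolding of the rules for `≤⃗μ`. -/
def SubVecStep (R : MuTy → MuTy → Prop) (A B : MuTy) : Prop :=
  (MuTy.IsAtom A ∧ A = B)
  ∨ (∃ D A' D' B', A = .app D A' ∧ B = .app D' B' ∧ R D D' ∧ R A' B')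
  ∨ (∃ A1 A2 B1 B2, A = .arrow A1 A2 ∧ B = .arrow B1 B2 ∧ R B1 A1 ∧ R A2 B2)
  ∨ (∃ b v A', A = .mu b v A' ∧ R (MuTy.subst b v A A') B)
  ∨ (¬ A.IsMu ∧ ∃ b w B', B = .mu b w B' ∧ R A (MuTy.subst b w B B'))
  ∨ (A.IsUnion ∧ ¬ B.IsMu ∧ ∀ A' ∈ A.comps, R A' B)
  ∨ (¬ A.IsUnion ∧ ¬ A.IsMu ∧ B.IsUnion ∧ ∃ B' ∈ B.comps, R A B')

/-- The generating function `Φ≤⃗μ`. -/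
def PhiSubVec (X : Set (MuTy × MuTy)) : Set (MuTy × MuTy) :=
  {p | SubVecStep (fun a b => (a, b) ∈ X) p.1 p.2}

/-- `A ≤⃗μ B`: the greatest fixed point of `Φ≤⃗μ`. -/
def SubVec (A B : MuTy) : Prop :=
  ∃ R : MuTy → MuTy → Prop, (∀ x y, R x y → SubVecStep R x y) ∧ R A B

/- ## Possibly infinite trees 𝔗 -/

inductive Leaf : Type
  | var : Bool → ℕ → Leaf
  | const : ℕ → Leaf
  | circ : Leaf
deriving DecidableEq

inductive TSym : Type
  | leaf : Leaf → TSym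
  | app : TSym
  | arrow : TSym
  | union : TSym
deriving DecidableEq

/-- Raw (partial) trees: a labelling of binary positions. -/
abbrev PTree := List Bool → Option TSym

def childT (t : PTree) (i : Bool) : PTree := fun π => t (i :: π)

def subtreeAt (t : PTree) (ρ : List Bool) : PTree := fun π => t (ρ ++ π)

def TSym.IsBinary : TSym → Prop
  | .leaf _ => False
  | _ => True

/-- The set 𝔗 of regular possibly infinite trees with no
    infinite branch consisting solely of ⊕-nodes. -/
structure ITree where
  label : PTree
  root_isSome : (label []).isSome
  child_iff : ∀ (π : List Bool) (i : Bool),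
      (label (π ++ [i])).isSome ↔ ∃ s, label π = some s ∧ s.IsBinary
  regular : {u : PTree | ∃ π : List Bool, (label π).isSome ∧ u = subtreeAt label π}.Finite
  noUnionBranch : ¬ ∃ (π : List Bool) (g : ℕ → Bool),
      ∀ n : ℕ, label (π ++ (List.range n).map g) = some TSym.union

/- ## Truncation ⌊·⌋k -/

def truncAux : List Bool → ℕ → PTree → Option TSym
  | [], 0, _ => some (.leaf .circ)
  | [], _ + 1, t => t []
  | _ :: _, 0, _ => none
  | i :: π, k + 1, t =>
      match t [] with
      | some .union => truncAux π (k + 1) (childT t i)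
      | some .app => truncAux π k (childT t i)
      | some .arrow => truncAux π k (childT t i)
      | _ => none

/-- The truncation of a tree at depth `k`. -/
def trunc (k : ℕ) (t : PTree) : PTree := fun π => truncAux π k t

/- ## The infinite unfolding ⟦·⟧ of a μ-type -/

def muDepth : MuTy → ℕ
  | .mu _ _ A => muDepth A + 1
  | _ => 0

def headUnfold : ℕ → MuTy → MuTy
  | 0, A => A
  | n + 1, .mu b v A => headUnfold n (MuTy.subst b v (.mu b v A) A)
  | _ + 1, A => A

/-- Unfold the head μ-binders away (total; fully unfolds contractive types). -/
def hnf (A : MuTy) : MuTy := headUnfold (muDepth A) A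

def unfoldLabel : List Bool → MuTy → Option TSym
  | [], A =>
      match hnf A with
      | .var b v => some (.leaf (.var b v))
      | .const c => some (.leaf (.const c))
      | .app _ _ => some .app
      | .arrow _ _ => some .arrow
      | .union _ _ => some .union
      | .mu _ _ _ => none
  | i :: π, A =>
      match hnf A with
      | .app B C => unfoldLabel π (if i then C else B)
      | .arrow B C => unfoldLabel π (if i then C else B)
      | .union B C => unfoldLabel π (if i then C else B)
      | _ => none

/-- `⟦A⟧`, the complete unfolding of a μ-type into a tree. -/
def treeOf (A : MuTy) : PTree := fun π => unfoldLabel π A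

/- ## Maximal-union components of a tree -/

/-- `ρ` reaches, through ⊕-nodes only, a non-⊕ node of `t`:
    the components of the maximal union decomposition of `t`. -/
def IsCompPath (t : PTree) (ρ : List Bool) : Prop :=
  (∀ ρ' : List Bool, ρ' <+: ρ → ρ' ≠ ρ → t ρ' = some TSym.union) ∧
  (t ρ).isSome ∧ t ρ ≠ some TSym.union

def compPaths (t : PTree) : Set (List Bool) := {ρ | IsCompPath t ρ}

/- ## Coinductive equality ≈T and subtyping ≤T on trees -/

def EqTStep (R : PTree → PTree → Prop) (A B : PTree) : Prop :=
  (∃ a, A [] = some (.leaf a) ∧ B [] = some (.leaf a))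
  ∨ (A [] = some .app ∧ B [] = some .app ∧
      R (childT A false) (childT B false) ∧ R (childT A true) (childT B true))
  ∨ (A [] = some .arrow ∧ B [] = some .arrow ∧
      R (childT A false) (childT B false) ∧ R (childT A true) (childT B true))
  ∨ ((A [] = some .union ∨ B [] = some .union) ∧
      (∀ ρ ∈ compPaths A, ∃ ρ' ∈ compPaths B, R (subtreeAt A ρ) (subtreeAt B ρ')) ∧
      (∀ ρ' ∈ compPaths B, ∃ ρ ∈ compPaths A, R (subtreeAt A ρ) (subtreeAt B ρ')))

/-- `≈T`, as the greatest fixed point of its generating function. -/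
def EqT (A B : PTree) : Prop :=
  ∃ R : PTree → PTree → Prop, (∀ x y, R x y → EqTStep R x y) ∧ R A B

def SubTStep (R : PTree → PTree → Prop) (A B : PTree) : Prop :=
  (∃ a, A [] = some (.leaf a) ∧ B [] = some (.leaf a))
  ∨ (A [] = some .app ∧ B [] = some .app ∧
      R (childT A false) (childT B false) ∧ R (childT A true) (childT B true))
  ∨ (A [] = some .arrow ∧ B [] = some .arrow ∧
      R (childT B false) (childT A false) ∧ R (childT A true) (childT B true))
  ∨ (A [] = some .union ∧ B [] ≠ some .union ∧
      ∀ ρ ∈ compPaths A, R (subtreeAt A ρ) B)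
  ∨ (A [] ≠ some .union ∧ B [] = some .union ∧
      ∃ ρ' ∈ compPaths B, R A (subtreeAt B ρ'))
  ∨ (A [] = some .union ∧ B [] = some .union ∧
      ∀ ρ ∈ compPaths A, ∃ ρ' ∈ compPaths B, R (subtreeAt A ρ) (subtreeAt B ρ'))

/-- `≤T`, as the greatest fixed point of its generating function. -/
def SubT (A B : PTree) : Prop :=
  ∃ R : PTree → PTree → Prop, (∀ x y, R x y → SubTStep R x y) ∧ R A B

/- ## Multi-hole μ⊕-contexts -/

inductive MuCtx : Type
  | hole : MuCtx
  | mu : Bool → ℕ → MuCtx → MuCtx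
  | union : MuCtx → MuCtx → MuCtx

namespace MuCtx

def holes : MuCtx → ℕ
  | hole => 1
  | mu _ _ C => C.holes
  | union C D => C.holes + D.holes

def fill : MuCtx → List MuTy → MuTy
  | hole, As => As.headD (.const 0)
  | mu b v C, As => .mu b v (C.fill As)
  | union C D, As => .union (C.fill (As.take C.holes)) (D.fill (As.drop C.holes))

/-- Positions of the holes, in left-to-right order. -/
def holePos : MuCtx → List (List Bool)
  | hole => [[]]
  | mu _ _ C => C.holePos.map (fun π => false :: π)
  | union C D => C.holePos.map (fun π => false :: π) ++ D.holePos.map (fun π => true :: π)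

/-- Projection of the hole at position `π` of `𝖠[A⃗]`. -/
def proj : MuCtx → List MuTy → List Bool → Option MuTy
  | hole, As, [] => As.head?
  | mu b v C, As, false :: π =>
      (proj C As π).map (MuTy.subst b v (.mu b v (C.fill As)))
  | union C _D, As, false :: π => proj C (As.take C.holes) π
  | union C D, As, true :: π => proj D (As.drop C.holes) π
  | _, _, _ => none

/-- Erase all μ-binders. -/
def erase : MuCtx → MuCtx
  | hole => hole
  | mu _ _ C => C.erase
  | union C D => .union C.erase D.erase

/-- ⊕-contexts (no μ-binders). -/
def IsUnionCtx : MuCtx → Prop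
  | hole => True
  | mu _ _ _ => False
  | union C D => C.IsUnionCtx ∧ D.IsUnionCtx

/-- Filling a (μ-erased) context with trees. -/
def fillT : MuCtx → List PTree → List Bool → Option TSym
  | hole, ts, π => (ts.headD (fun _ => none)) π
  | mu _ _ C, ts, π => fillT C ts π
  | union _ _, _, [] => some TSym.union
  | union C _D, ts, false :: π => fillT C (ts.take C.holes) π
  | union C D, ts, true :: π => fillT D (ts.drop C.holes) π

end MuCtx

/- ## n-ary-union trees 𝔗ⁿ -/

inductive NSym : Type
  | leaf : Leaf → NSym
  | app : NSym
  | arrow : NSym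
  | union : ℕ → NSym

abbrev PTreeN := List ℕ → Option NSym

def childN (t : PTreeN) (j : ℕ) : PTreeN := fun π => t (j :: π)

def IsUnionRootN (t : PTreeN) : Prop := ∃ n, t [] = some (.union n)

/-- A key realising the left-to-right (lexicographic) order of prefix-free
    sets of positions. -/
def pathKey : List Bool → ℚ
  | [] => 0
  | b :: ρ => (if b then 1 else 0) + pathKey ρ / 2

/-- `ρ` is the `j`-th (in left-to-right order, starting from 0) component path of `t`. -/
def IsNthComp (t : PTree) (j : ℕ) (ρ : List Bool) : Prop :=
  IsCompPath t ρ ∧ {ρ' | IsCompPath t ρ' ∧ pathKey ρ' < pathKey ρ}.ncard = j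

-- The translation ⟨·⟩ : 𝔗 → 𝔗ⁿ flattening maximal unions into n-ary unions.
open Classical in
noncomputable def transLabel : List ℕ → PTree → Option NSym
  | [], t =>
      match t [] with
      | some (.leaf a) => some (.leaf a)
      | some .app => some NSym.app
      | some .arrow => some NSym.arrow
      | some .union => some (.union (compPaths t).ncard)
      | none => none
  | j :: π, t =>
      match t [] with
      | some .union =>
          if h : ∃ ρ, IsNthComp t j ρ then transLabel π (subtreeAt t h.choose)
          else none
      | some .app => if j < 2 then transLabel π (childT t (j == 1)) else none
      | some .arrow => if j < 2 then transLabel π (childT t (j == 1)) else none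
      | _ => none

noncomputable def transN (t : PTree) : PTreeN := fun π => transLabel π t

/- ## Subtyping and equivalence up-to a relation ℛ on 𝔗ⁿ -/

def NSubStep (RR S : PTreeN → PTreeN → Prop) (A B : PTreeN) : Prop :=
  let P := fun x y => S x y ∨ RR x y
  (∃ a, A [] = some (.leaf a) ∧ B [] = some (.leaf a))
  ∨ (A [] = some .app ∧ B [] = some .app ∧
      P (childN A 0) (childN B 0) ∧ P (childN A 1) (childN B 1))
  ∨ (A [] = some .arrow ∧ B [] = some .arrow ∧
      P (childN B 0) (childN A 0) ∧ P (childN A 1) (childN B 1))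
  ∨ (∃ n m, A [] = some (.union n) ∧ B [] = some (.union m) ∧
      (∀ i < n, ¬ IsUnionRootN (childN A i)) ∧ (∀ j < m, ¬ IsUnionRootN (childN B j)) ∧
      ∃ f : ℕ → ℕ, ∀ i < n, f i < m ∧ P (childN A i) (childN B (f i)))
  ∨ (∃ n, A [] = some (.union n) ∧ ¬ IsUnionRootN B ∧
      (∀ i < n, ¬ IsUnionRootN (childN A i)) ∧ ∀ i < n, P (childN A i) B)
  ∨ (∃ m, B [] = some (.union m) ∧ ¬ IsUnionRootN A ∧
      (∀ j < m, ¬ IsUnionRootN (childN B j)) ∧ ∃ k < m, P A (childN B k))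

/-- The subtyping relation up-to `RR` on 𝔗ⁿ. -/
def SubN (RR : PTreeN → PTreeN → Prop) (A B : PTreeN) : Prop :=
  ∃ S : PTreeN → PTreeN → Prop, (∀ x y, S x y → NSubStep RR S x y) ∧ S A B

def NEqStep (RR S : PTreeN → PTreeN → Prop) (A B : PTreeN) : Prop :=
  let P := fun x y => S x y ∨ RR x y
  (∃ a, A [] = some (.leaf a) ∧ B [] = some (.leaf a))
  ∨ (A [] = some .app ∧ B [] = some .app ∧
      P (childN A 0) (childN B 0) ∧ P (childN A 1) (childN B 1))
  ∨ (A [] = some .arrow ∧ B [] = some .arrow ∧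
      P (childN A 0) (childN B 0) ∧ P (childN A 1) (childN B 1))
  ∨ (∃ n m, A [] = some (.union n) ∧ B [] = some (.union m) ∧
      (∀ i < n, ¬ IsUnionRootN (childN A i)) ∧ (∀ j < m, ¬ IsUnionRootN (childN B j)) ∧
      (∃ f : ℕ → ℕ, ∀ i < n, f i < m ∧ P (childN A i) (childN B (f i))) ∧
      (∃ g : ℕ → ℕ, ∀ j < m, g j < n ∧ P (childN A (g j)) (childN B j)))
  ∨ (∃ n, A [] = some (.union n) ∧ ¬ IsUnionRootN B ∧
      (∀ i < n, ¬ IsUnionRootN (childN A i)) ∧ ∀ i < n, P (childN A i) B)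
  ∨ (∃ m, B [] = some (.union m) ∧ ¬ IsUnionRootN A ∧
      (∀ j < m, ¬ IsUnionRootN (childN B j)) ∧ ∀ j < m, P A (childN B j))

/-- The equivalence relation up-to `RR` on 𝔗ⁿ. -/
def EqN (RR : PTreeN → PTreeN → Prop) (A B : PTreeN) : Prop :=
  ∃ S : PTreeN → PTreeN → Prop, (∀ x y, S x y → NEqStep RR S x y) ∧ S A B

/- ## CAP: patterns, terms, matching, reduction, typing -/

inductive Pat : Type
  | matchv : ℕ → Pat
  | const : ℕ → Pat
  | comp : Pat → Pat → Pat

/-- Matchables of a pattern. -/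
def Pat.mv : Pat → Set ℕ
  | .matchv x => {x}
  | .const _ => ∅
  | .comp p q => p.mv ∪ q.mv

/-- Linear patterns. -/
def Pat.Linear : Pat → Prop
  | .matchv _ => True
  | .const _ => True
  | .comp p q => p.Linear ∧ q.Linear ∧ ∀ x ∈ p.mv, x ∉ q.mv

/-- Typing contexts (for terms and for matchables of patterns). -/
abbrev TyCtx := ℕ → Option MuTy

inductive Tm : Type
  | var : ℕ → Tm
  | const : ℕ → Tm
  | app : Tm → Tm → Tm
  | abs : List (Pat × TyCtx × Tm) → Tm

/-- Data structures. -/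
def isDataB : Tm → Bool
  | .const _ => true
  | .app d _ => isDataB d
  | _ => false

/-- Matchable forms: data structures and abstractions. -/
def isMatchableB : Tm → Bool
  | .abs _ => true
  | t => isDataB t

/-- Outcome of matching. -/
inductive MOut : Type
  | subst : (ℕ → Option Tm) → MOut
  | fail : MOut
  | wait : MOut

/-- Disjoint union of matching outcomes. -/
def MOut.join : MOut → MOut → MOut
  | .fail, _ => .fail
  | _, .fail => .fail
  | .wait, _ => .wait
  | _, .wait => .wait
  | .subst σ₁, .subst σ₂ => .subst (fun x => (σ₁ x).orElse (fun _ => σ₂ x))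

/-- The matching operation `p ⋗ u`. -/
def pmatch : Pat → Tm → MOut
  | .matchv x, u => .subst (fun y => if y = x then some u else none)
  | .const c, .const c' => if c = c' then .subst (fun _ => none) else .fail
  | .comp p q, .app u v =>
      if isMatchableB (.app u v) then (pmatch p u).join (pmatch q v) else .wait
  | _, u => if isMatchableB u then .fail else .wait

-- Applying a substitution to a term.
mutual
  def applySubst (σ : ℕ → Option Tm) : Tm → Tm
    | .var x => (σ x).getD (.var x)
    | .const c => .const c
    | .app t u => .app (applySubst σ t) (applySubst σ u)
    | .abs bs => .abs (applySubstBs σ bs)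
  def applySubstBs (σ : ℕ → Option Tm) : List (Pat × TyCtx × Tm) → List (Pat × TyCtx × Tm)
    | [] => []
    | (p, θ, s) :: bs => (p, θ, applySubst σ s) :: applySubstBs σ bs
end

/-- Reduction, the context closure of the β-rule of CAP. -/
inductive Step : Tm → Tm → Prop
  | beta (bs : List (Pat × TyCtx × Tm)) (u : Tm) (j : ℕ) (hj : j < bs.length)
      (σ : ℕ → Option Tm) :
      (∀ i (hi : i < bs.length), i < j → pmatch (bs.get ⟨i, hi⟩).1 u = .fail) →
      pmatch (bs.get ⟨j, hj⟩).1 u = .subst σ →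
      Step (.app (.abs bs) u) (applySubst σ (bs.get ⟨j, hj⟩).2.2)
  | appL {t t' : Tm} (u : Tm) : Step t t' → Step (.app t u) (.app t' u)
  | appR (t : Tm) {u u' : Tm} : Step u u' → Step (.app t u) (.app t u')
  | abs (l r : List (Pat × TyCtx × Tm)) (p : Pat) (θ : TyCtx) {s s' : Tm} :
      Step s s' → Step (.abs (l ++ (p, θ, s) :: r)) (.abs (l ++ (p, θ, s') :: r))

/-- All patterns occurring in a term are linear. -/
inductive TmWF : Tm → Prop
  | var (x : ℕ) : TmWF (.var x)
  | const (c : ℕ) : TmWF (.const c)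
  | app {t u : Tm} : TmWF t → TmWF u → TmWF (.app t u)
  | abs {bs : List (Pat × TyCtx × Tm)} :
      (∀ b ∈ bs, b.1.Linear) → (∀ b ∈ bs, TmWF b.2.2) → TmWF (.abs bs)

-- Values.
mutual
  inductive Neut : Tm → Prop
    | var (x : ℕ) : Neut (.var x)
    | const (c : ℕ) : Neut (.const c)
    | app {t u : Tm} : Neut t → IsValue u → Neut (.app t u)
  inductive IsValue : Tm → Prop
    | neut {t : Tm} : Neut t → IsValue t
    | abs (bs : List (Pat × TyCtx × Tm)) : IsValue (.abs bs)
end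

/- ## Pattern typing and compatibility -/

inductive PatTy : TyCtx → Pat → MuTy → Prop
  | matchv {θ : TyCtx} {x : ℕ} {A : MuTy} : θ x = some A → PatTy θ (.matchv x) A
  | const (θ : TyCtx) (c : ℕ) : PatTy θ (.const c) (.const c)
  | comp {θ : TyCtx} {p q : Pat} {D A : MuTy} :
      PatTy θ p D → MuTy.IsData D → PatTy θ q A → PatTy θ (.comp p q) (.app D A)

/-- Symbols admitted at a position of a μ-type. -/
inductive PSym : Type
  | var : Bool → ℕ → PSym
  | const : ℕ → PSym
  | arrow : PSym
  | app : PSym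

/-- `Admits A π s`: the symbol `s` belongs to `A@π`. -/
inductive Admits : MuTy → List Bool → PSym → Prop
  | var (b : Bool) (v : ℕ) : Admits (.var b v) [] (.var b v)
  | const (c : ℕ) : Admits (.const c) [] (.const c)
  | arrowE (A B : MuTy) : Admits (.arrow A B) [] .arrow
  | appE (A B : MuTy) : Admits (.app A B) [] .app
  | arrow1 {A : MuTy} {π : List Bool} {s : PSym} (B : MuTy) :
      Admits A π s → Admits (.arrow A B) (false :: π) s
  | arrow2 (A : MuTy) {B : MuTy} {π : List Bool} {s : PSym} :
      Admits B π s → Admits (.arrow A B) (true :: π) s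
  | app1 {A : MuTy} {π : List Bool} {s : PSym} (B : MuTy) :
      Admits A π s → Admits (.app A B) (false :: π) s
  | app2 (A : MuTy) {B : MuTy} {π : List Bool} {s : PSym} :
      Admits B π s → Admits (.app A B) (true :: π) s
  | unionL {A : MuTy} {π : List Bool} {s : PSym} (B : MuTy) :
      Admits A π s → Admits (.union A B) π s
  | unionR (A : MuTy) {B : MuTy} {π : List Bool} {s : PSym} :
      Admits B π s → Admits (.union A B) π s
  | mu {b : Bool} {v : ℕ} {A : MuTy} {π : List Bool} {s : PSym} :
      Admits (MuTy.subst b v (.mu b v A) A) π s → Admits (.mu b v A) π s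

/-- Subpattern at a position. -/
def Pat.at? : Pat → List Bool → Option Pat
  | p, [] => some p
  | .comp p q, i :: π => if i then q.at? π else p.at? π
  | _, _ :: _ => none

/-- Applying a (pattern) substitution to a pattern. -/
def psubst (σ : ℕ → Option Pat) : Pat → Pat
  | .matchv x => (σ x).getD (.matchv x)
  | .const c => .const c
  | .comp p q => .comp (psubst σ p) (psubst σ q)

/-- `p` subsumes `q`. -/
def Subsumes (p q : Pat) : Prop := ∃ σ, psubst σ p = q

def CommonPos (p q : Pat) (π : List Bool) : Prop :=
  (p.at? π).isSome ∧ (q.at? π).isSome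

/-- Mismatching positions between two patterns. -/
def CPos (p q : Pat) (π : List Bool) : Prop :=
  CommonPos p q π ∧ (∀ π' : List Bool, π' ≠ [] → ¬ CommonPos p q (π ++ π')) ∧
  ∃ p' q', p.at? π = some p' ∧ q.at? π = some q' ∧ ¬ Subsumes p' q'

/-- Compatibility of `⟨θ ⊳ p : A⟩` with `⟨θ' ⊳ q : B⟩`. -/
def Compat (p : Pat) (A : MuTy) (q : Pat) (B : MuTy) : Prop :=
  (∀ π, CPos p q π → ∃ s, Admits A π s ∧ Admits B π s) → Sub B A

def ctxDom (θ : TyCtx) : Set ℕ := {x | (θ x).isSome}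

def ctxExt (Γ θ : TyCtx) : TyCtx := fun x => (θ x).orElse (fun _ => Γ x)

/-- `⊕` of a nonempty list of types. -/
def bigUnion : List MuTy → MuTy
  | [] => .const 0
  | [A] => A
  | A :: As => .union A (bigUnion As)

/- ## Term typing -/

inductive Ty : TyCtx → Tm → MuTy → Prop
  | var {Γ : TyCtx} {x : ℕ} {A : MuTy} : Γ x = some A → Ty Γ (.var x) A
  | const (Γ : TyCtx) (c : ℕ) : Ty Γ (.const c) (.const c)
  | comp {Γ : TyCtx} {r u : Tm} {D A : MuTy} :
      Ty Γ r D → MuTy.IsData D → Ty Γ u A → Ty Γ (.app r u) (.app D A)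
  | abs {Γ : TyCtx} (l : List ((Pat × TyCtx × Tm) × MuTy)) {B : MuTy} :
      l ≠ [] →
      (∀ i j (hi : i < l.length) (hj : j < l.length), i < j →
        Compat (l.get ⟨i, hi⟩).1.1 (l.get ⟨i, hi⟩).2
               (l.get ⟨j, hj⟩).1.1 (l.get ⟨j, hj⟩).2) →
      (∀ b ∈ l, PatTy b.1.2.1 b.1.1 b.2) →
      (∀ b ∈ l, ctxDom b.1.2.1 = Pat.mv b.1.1) →
      (∀ b ∈ l, Ty (ctxExt Γ b.1.2.1) b.1.2.2 B) →
      Ty Γ (.abs (l.map Prod.fst)) (.arrow (bigUnion (l.map Prod.snd)) B)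
  | app {Γ : TyCtx} {r u : Tm} {B : MuTy} (As : List MuTy) (k : ℕ) (hk : k < As.length) :
      Ty Γ r (.arrow (bigUnion As) B) →
      Ty Γ u (As.get ⟨k, hk⟩) →
      Ty Γ (.app r u) B
  | sub {Γ : TyCtx} {s : Tm} {A A' : MuTy} : Ty Γ s A → Sub A A' → Ty Γ s A'

/- ## Syntax-directed term typing -/

inductive TySD : TyCtx → Tm → MuTy → Prop
  | var {Γ : TyCtx} {x : ℕ} {A : MuTy} : Γ x = some A → TySD Γ (.var x) A
  | const (Γ : TyCtx) (c : ℕ) : TySD Γ (.const c) (.const c)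
  | comp {Γ : TyCtx} {r u : Tm} {D A : MuTy} :
      TySD Γ r D → MuTy.IsData D → TySD Γ u A → TySD Γ (.app r u) (.app D A)
  | abs {Γ : TyCtx} (l : List ((Pat × TyCtx × Tm) × MuTy × MuTy)) :
      l ≠ [] →
      (∀ i j (hi : i < l.length) (hj : j < l.length), i < j →
        Compat (l.get ⟨i, hi⟩).1.1 (l.get ⟨i, hi⟩).2.1
               (l.get ⟨j, hj⟩).1.1 (l.get ⟨j, hj⟩).2.1) →
      (∀ b ∈ l, PatTy b.1.2.1 b.1.1 b.2.1) →
      (∀ b ∈ l, ctxDom b.1.2.1 = Pat.mv b.1.1) →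
      (∀ b ∈ l, TySD (ctxExt Γ b.1.2.1) b.1.2.2 b.2.2) →
      TySD Γ (.abs (l.map Prod.fst))
        (.arrow (bigUnion (l.map (fun b => b.2.1))) (bigUnion (l.map (fun b => b.2.2))))
  | app {Γ : TyCtx} {r u : Tm} {A C : MuTy} (ABs : List (MuTy × MuTy)) :
      ABs ≠ [] →
      TySD Γ r A →
      EqMu A (bigUnion (ABs.map (fun q => .arrow q.1 q.2))) →
      (∀ q ∈ ABs, ¬ (q.1).IsUnion) →
      TySD Γ u C →
      (∀ q ∈ ABs, Sub C q.1) →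
      TySD Γ (.app r u) (bigUnion (ABs.map Prod.snd))


/- ## Auxiliary lemmas for decompose_union -/

lemma MuCtx.holes_pos (U : MuCtx) : 1 ≤ U.holes := by
  induction U with
  | hole => simp [MuCtx.holes]
  | mu b v C ih => simpa [MuCtx.holes] using ih
  | union C D ih1 ih2 => simp only [MuCtx.holes]; omega

lemma treeOf_union_nil (A1 A2 : MuTy) : treeOf (.union A1 A2) [] = some TSym.union := rfl

lemma treeOf_union_cons (A1 A2 : MuTy) (i : Bool) (π : List Bool) :
    treeOf (.union A1 A2) (i :: π) = treeOf (if i then A2 else A1) π := by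
  cases i <;> rfl

/-- The conclusion of `decompose_union`. -/
def DecompConcl (A : MuTy) (ts : List PTree) : Prop :=
  ∃ (C : MuCtx) (Cs : List MuCtx) (Bs : List MuTy) (f g : ℕ → ℕ),
      C.IsUnionCtx ∧ Bs.length = C.holes ∧ Bs.length ≤ ts.length ∧
      Cs.length = Bs.length ∧ (∀ X ∈ Bs, ¬ X.IsUnion) ∧ C.fill Bs = A ∧
      ∀ l (hl : l < Bs.length), ∃ Cl : MuCtx,
        Cs[l]? = some Cl ∧ Cl.IsUnionCtx ∧
        f l ≤ g l ∧ g l < ts.length ∧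
        Cl.holes = g l + 1 - f l ∧
        treeOf (Bs.get ⟨l, hl⟩) =
          MuCtx.fillT Cl ((ts.drop (f l)).take (g l + 1 - f l))

lemma decompose_base (A : MuTy) (hnotU : ¬ A.IsUnion) (U : MuCtx) (hU : U.IsUnionCtx)
    (ts : List PTree) (hlen : ts.length = U.holes)
    (heq : treeOf A = MuCtx.fillT U ts) : DecompConcl A ts := by
  have hpos : 1 ≤ ts.length := hlen ▸ U.holes_pos
  refine ⟨.hole, [U], [A], fun _ => 0, fun _ => ts.length - 1,
    trivial, rfl, hpos, rfl, by simpa using hnotU, rfl, ?_⟩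
  intro l hl
  have hl0 : l = 0 := by simpa using hl
  subst hl0
  refine ⟨U, rfl, hU, Nat.zero_le _, ?_, ?_, ?_⟩
  · show ts.length - 1 < ts.length; omega
  · show U.holes = ts.length - 1 + 1 - 0; omega
  · show treeOf A = MuCtx.fillT U ((ts.drop 0).take (ts.length - 1 + 1 - 0))
    have h1 : ts.length - 1 + 1 - 0 = ts.length := by omega
    rw [h1]
    simpa using heq

lemma decompose_main (A : MuTy) (U : MuCtx) (hU : U.IsUnionCtx)
    (ts : List PTree) (hlen : ts.length = U.holes)
    (hnu : ∀ t ∈ ts, t [] ≠ some TSym.union)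
    (heq : treeOf A = MuCtx.fillT U ts) : DecompConcl A ts := by
  induction A generalizing U ts with
  | union A1 A2 ih1 ih2 =>
    cases U with
    | hole =>
      exfalso
      obtain ⟨t, rfl⟩ : ∃ t, ts = [t] := by
        cases ts with
        | nil => simp [MuCtx.holes] at hlen
        | cons a l =>
          cases l with
          | nil => exact ⟨a, rfl⟩
          | cons b l => simp [MuCtx.holes] at hlen
      have h := congrFun heq []
      rw [treeOf_union_nil] at h
      exact hnu t (by simp) (by simpa [MuCtx.fillT] using h.symm)
    | mu b v C => exact hU.elim
    | union U1 U2 =>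
      have hlen' : ts.length = U1.holes + U2.holes := hlen
      have hts1 : (ts.take U1.holes).length = U1.holes := by
        rw [List.length_take]; omega
      have hts2 : (ts.drop U1.holes).length = U2.holes := by
        rw [List.length_drop]; omega
      have heq1 : treeOf A1 = MuCtx.fillT U1 (ts.take U1.holes) := by
        funext π
        have h := congrFun heq (false :: π)
        rw [treeOf_union_cons] at h
        simpa [MuCtx.fillT] using h
      have heq2 : treeOf A2 = MuCtx.fillT U2 (ts.drop U1.holes) := by
        funext π
        have h := congrFun heq (true :: π)
        rw [treeOf_union_cons] at h
        simpa [MuCtx.fillT] using h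
      obtain ⟨C1, Cs1, Bs1, f1, g1, hC1, hB1len, hB1le, hCs1len, hB1nu, hC1fill, hper1⟩ :=
        ih1 U1 hU.1 (ts.take U1.holes) hts1
          (fun t ht => hnu t (List.mem_of_mem_take ht)) heq1
      obtain ⟨C2, Cs2, Bs2, f2, g2, hC2, hB2len, hB2le, hCs2len, hB2nu, hC2fill, hper2⟩ :=
        ih2 U2 hU.2 (ts.drop U1.holes) hts2
          (fun t ht => hnu t (List.mem_of_mem_drop ht)) heq2
      rw [hts1] at hB1le
      rw [hts2] at hB2le
      refine ⟨.union C1 C2, Cs1 ++ Cs2, Bs1 ++ Bs2,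
        fun l => if l < Bs1.length then f1 l else U1.holes + f2 (l - Bs1.length),
        fun l => if l < Bs1.length then g1 l else U1.holes + g2 (l - Bs1.length),
        ⟨hC1, hC2⟩, ?_, ?_, ?_, ?_, ?_, ?_⟩
      · simp [MuCtx.holes, hB1len, hB2len]
      · rw [List.length_append]; omega
      · simp [hCs1len, hCs2len]
      · intro X hX
        rcases List.mem_append.1 hX with h | h
        · exact hB1nu X h
        · exact hB2nu X h
      · show MuTy.union (C1.fill ((Bs1 ++ Bs2).take C1.holes))
            (C2.fill ((Bs1 ++ Bs2).drop C1.holes)) = _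
        rw [← hB1len, List.take_left, List.drop_left, hC1fill, hC2fill]
      · intro l hl
        rw [List.length_append] at hl
        by_cases hcase : l < Bs1.length
        · obtain ⟨Cl, hCl, hClU, hfg, hglt, hholes, htree⟩ := hper1 l hcase
          rw [hts1] at hglt
          refine ⟨Cl, ?_, hClU, ?_, ?_, ?_, ?_⟩
          · rw [List.getElem?_append_left (hCs1len ▸ hcase)]; exact hCl
          · simp only [if_pos hcase]; exact hfg
          · simp only [if_pos hcase]; omega
          · simp only [if_pos hcase]; exact hholes
          · simp only [if_pos hcase]
            have hget : (Bs1 ++ Bs2).get ⟨l, by rw [List.length_append]; omega⟩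
                = Bs1.get ⟨l, hcase⟩ := by
              simp only [List.get_eq_getElem]
              exact List.getElem_append_left hcase
            rw [List.drop_take, List.take_take] at htree
            have hmin : min (g1 l + 1 - f1 l) (U1.holes - f1 l) = g1 l + 1 - f1 l := by
              omega
            rw [hmin] at htree
            rw [hget]
            exact htree
        · push_neg at hcase
          have hl2 : l - Bs1.length < Bs2.length := by omega
          obtain ⟨Cl, hCl, hClU, hfg, hglt, hholes, htree⟩ := hper2 (l - Bs1.length) hl2
          rw [hts2] at hglt
          refine ⟨Cl, ?_, hClU, ?_, ?_, ?_, ?_⟩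
          · rw [List.getElem?_append_right (by omega : Cs1.length ≤ l), hCs1len]
            exact hCl
          · simp only [if_neg (by omega : ¬ l < Bs1.length)]; omega
          · simp only [if_neg (by omega : ¬ l < Bs1.length)]; omega
          · simp only [if_neg (by omega : ¬ l < Bs1.length)]
            rw [hholes]; omega
          · simp only [if_neg (by omega : ¬ l < Bs1.length)]
            have hget : (Bs1 ++ Bs2).get ⟨l, by rw [List.length_append]; omega⟩
                = Bs2.get ⟨l - Bs1.length, hl2⟩ := by
              simp only [List.get_eq_getElem]
              exact List.getElem_append_right hcase
            have hk : U1.holes + g2 (l - Bs1.length) + 1 - (U1.holes + f2 (l - Bs1.length))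
                = g2 (l - Bs1.length) + 1 - f2 (l - Bs1.length) := by omega
            rw [hget, hk, ← List.drop_drop]
            exact htree
  | var b v => exact decompose_base _ (by simp [MuTy.IsUnion]) U hU ts hlen heq
  | const c => exact decompose_base _ (by simp [MuTy.IsUnion]) U hU ts hlen heq
  | app A B ihA ihB => exact decompose_base _ (by simp [MuTy.IsUnion]) U hU ts hlen heq
  | arrow A B ihA ihB => exact decompose_base _ (by simp [MuTy.IsUnion]) U hU ts hlen heq
  | mu b v A ih => exact decompose_base _ (by simp [MuTy.IsUnion]) U hU ts hlen heq

/- STATEMENT 7 -/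

theorem decompose_union (A : MuTy) (hA : A.Contr) (U : MuCtx) (hU : U.IsUnionCtx)
    (ts : List PTree) (hlen : ts.length = U.holes)
    (hnu : ∀ t ∈ ts, t [] ≠ some TSym.union)
    (heq : treeOf A = MuCtx.fillT U ts) :
    ∃ (C : MuCtx) (Cs : List MuCtx) (Bs : List MuTy) (f g : ℕ → ℕ),
      C.IsUnionCtx ∧ Bs.length = C.holes ∧ Bs.length ≤ ts.length ∧
      Cs.length = Bs.length ∧ (∀ X ∈ Bs, ¬ X.IsUnion) ∧ C.fill Bs = A ∧
      ∀ l (hl : l < Bs.length), ∃ Cl : MuCtx,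
        Cs[l]? = some Cl ∧ Cl.IsUnionCtx ∧
        f l ≤ g l ∧ g l < ts.length ∧
        Cl.holes = g l + 1 - f l ∧
        treeOf (Bs.get ⟨l, hl⟩) =
          MuCtx.fillT Cl ((ts.drop (f l)).take (g l + 1 - f l)) := by
  exact decompose_main A U hU ts hlen hnu heq

end CAPPaper
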